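/- Let 0 < p < 1/2. Define K : ({0,1} × [0,∞))² → ℝ by K((0,t),(0,s)) = min(t,s), K((0,t),(1,s)) = (min(t,s))^{1−p}·s^p, K((1,t),(0,s)) = (min(t,s))^{1−p}·t^p, and K((1,t),(1,s)) = (max(t,s))^p·(min(t,s))^{1−p}/(1−2p). Then K is positive semidefinite: for every n ≥ 1, all points (ε_1,t_1), …, (ε_n,t_n) in {0,1} × [0,∞) and all real numbers c_1, …, c_n, one has ∑_{i=1}^n ∑_{j=1}^n c_i c_j K((ε_i,t_i),(ε_j,t_j)) ≥ 0. -/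

import Mathlib

/-!
The kernel is a Gram kernel in `L²((0, ∞); ℝ²)`: with `q₀ = 0`, `q₁ = p`, and unit vectors
`e₀ = (1, 0)`, `e₁ = (1 - p, √(p (2 - p)))` (so that `⟪e₀, e₁⟫ = 1 - p`), the features
`φ_(ε,t)(u) = 1_{(0,t]}(u) (t / u)^{q_ε} e_ε` satisfy
`K((ε, t), (δ, s)) = ∫ ⟪φ_(ε,t)(u), φ_(δ,s)(u)⟫ du`, because
`∫₀^{t ∧ s} u^{-(q_ε + q_δ)} du = (t ∧ s)^{1 - q_ε - q_δ} / (1 - q_ε - q_δ)` and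
`t^p s^p = (t ∨ s)^p (t ∧ s)^p`. Hence `∑ cᵢ cⱼ K(xᵢ, xⱼ) = ∫ ‖∑ cᵢ φ_{xᵢ}(u)‖² du ≥ 0`;
the condition `p < 1/2` makes `u^{-2p}` integrable at `0`.
-/

/-- The joint covariance kernel of a Brownian motion (label `false`) together with its noise
reinforced version (label `true`) with reinforcement parameter `p`.
Powers are real powers (`Real.rpow`). -/
noncomputable def jointBMCov (p : ℝ) : Bool × ℝ → Bool × ℝ → ℝ
  | (false, t), (false, s) => min t s
  | (false, t), (true, s) => (min t s) ^ (1 - p) * s ^ p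
  | (true, t), (false, s) => (min t s) ^ (1 - p) * t ^ p
  | (true, t), (true, s) => (max t s) ^ p * (min t s) ^ (1 - p) / (1 - 2 * p)

open MeasureTheory Set Real
open scoped InnerProductSpace

section Gram

variable {E : Type*} [NormedAddCommGroup E] [InnerProductSpace ℝ E] {ι : Type*}

theorem sum_sum_mul_inner_eq_inner_sum (s : Finset ι) (c : ι → ℝ) (v : ι → E) :
    ∑ i ∈ s, ∑ j ∈ s, c i * c j * ⟪v i, v j⟫_ℝ = ⟪∑ i ∈ s, c i • v i, ∑ j ∈ s, c j • v j⟫_ℝ := by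
  simp_rw [sum_inner, inner_sum, real_inner_smul_left, real_inner_smul_right, mul_assoc]

theorem sum_sum_mul_integral_inner_nonneg {α : Type*} [MeasurableSpace α] {μ : Measure α}
    (s : Finset ι) (c : ι → ℝ) (f : ι → α → E)
    (hf : ∀ i j, Integrable (fun u => ⟪f i u, f j u⟫_ℝ) μ) :
    0 ≤ ∑ i ∈ s, ∑ j ∈ s, c i * c j * ∫ u, ⟪f i u, f j u⟫_ℝ ∂μ := by
  have hint : ∀ i j, Integrable (fun u => c i * c j * ⟪f i u, f j u⟫_ℝ) μ :=
    fun i j => (hf i j).const_mul _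
  calc 0 ≤ ∫ u, ⟪∑ i ∈ s, c i • f i u, ∑ j ∈ s, c j • f j u⟫_ℝ ∂μ :=
        integral_nonneg fun u => real_inner_self_nonneg
    _ = ∫ u, ∑ i ∈ s, ∑ j ∈ s, c i * c j * ⟪f i u, f j u⟫_ℝ ∂μ := by
        simp_rw [sum_sum_mul_inner_eq_inner_sum]
    _ = ∑ i ∈ s, ∑ j ∈ s, c i * c j * ∫ u, ⟪f i u, f j u⟫_ℝ ∂μ := by
        rw [integral_finsetSum _ fun i _ => integrable_finsetSum _ fun j _ => hint i j]
        refine Finset.sum_congr rfl fun i _ => ?_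
        rw [integral_finsetSum _ fun j _ => hint i j]
        simp_rw [integral_const_mul]

end Gram

theorem integral_indicator_Ioc_rpow_neg {r m : ℝ} (hr : r < 1) (hm : 0 ≤ m) :
    ∫ u, (Ioc 0 m).indicator (fun u => u ^ (-r)) u = m ^ (1 - r) / (1 - r) := by
  rw [integral_indicator measurableSet_Ioc, ← intervalIntegral.integral_of_le hm,
    integral_rpow (Or.inl (by linarith)), zero_rpow (by linarith), neg_add_eq_sub]
  ring

theorem integrable_indicator_Ioc_rpow_neg {r m : ℝ} (hr : r < 1) (hm : 0 ≤ m) :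
    Integrable ((Ioc 0 m).indicator fun u => u ^ (-r)) := by
  rw [integrable_indicator_iff measurableSet_Ioc,
    ← intervalIntegrable_iff_integrableOn_Ioc_of_le hm]
  exact intervalIntegral.intervalIntegrable_rpow' (by linarith)

def nrbmExponent (p : ℝ) : Bool → ℝ
  | false => 0
  | true => p

noncomputable def nrbmDirection (p : ℝ) : Bool → EuclideanSpace ℝ (Fin 2)
  | false => !₂[1, 0]
  | true => !₂[1 - p, √(p * (2 - p))]

noncomputable def nrbmFeature (p : ℝ) (x : Bool × ℝ) (u : ℝ) : EuclideanSpace ℝ (Fin 2) :=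
  (Ioc 0 x.2).indicator (fun u => x.2 ^ nrbmExponent p x.1 * u ^ (-nrbmExponent p x.1)) u •
    nrbmDirection p x.1

theorem nrbmExponent_add_lt_one {p : ℝ} (hp : p < 1 / 2) (ε δ : Bool) :
    nrbmExponent p ε + nrbmExponent p δ < 1 := by
  cases ε <;> cases δ <;> simp only [nrbmExponent] <;> linarith

theorem inner_nrbmDirection {p : ℝ} (hp0 : 0 ≤ p) (hp2 : p ≤ 2) (ε δ : Bool) :
    ⟪nrbmDirection p ε, nrbmDirection p δ⟫_ℝ = if ε = δ then 1 else 1 - p := by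
  have hsqrt : √(p * (2 - p)) ^ 2 = p * (2 - p) := sq_sqrt (mul_nonneg hp0 (by linarith))
  cases ε <;> cases δ <;> simp only [nrbmDirection, PiLp.inner_apply, Fin.sum_univ_two] <;>
    simp [hsqrt]
  ring

theorem inner_nrbmFeature (p : ℝ) (ε δ : Bool) (t s u : ℝ) :
    ⟪nrbmFeature p (ε, t) u, nrbmFeature p (δ, s) u⟫_ℝ =
      ⟪nrbmDirection p ε, nrbmDirection p δ⟫_ℝ * t ^ nrbmExponent p ε * s ^ nrbmExponent p δ *
        (Ioc 0 (min t s)).indicator (fun u => u ^ (-(nrbmExponent p ε + nrbmExponent p δ))) u := by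
  simp only [nrbmFeature, real_inner_smul_left, real_inner_smul_right]
  by_cases hu : u ∈ Ioc 0 (min t s)
  · have hut : u ∈ Ioc 0 t := ⟨hu.1, hu.2.trans (min_le_left _ _)⟩
    have hus : u ∈ Ioc 0 s := ⟨hu.1, hu.2.trans (min_le_right _ _)⟩
    rw [indicator_of_mem hu, indicator_of_mem hut, indicator_of_mem hus, neg_add,
      rpow_add hu.1]
    ring
  · rw [indicator_of_notMem hu, mul_zero]
    have hts : u ∉ Ioc 0 t ∨ u ∉ Ioc 0 s := by
      contrapose! hu
      exact ⟨hu.1.1, le_min hu.1.2 hu.2.2⟩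
    rcases hts with h | h
    · rw [indicator_of_notMem h, zero_mul, mul_zero]
    · rw [indicator_of_notMem h, zero_mul]

theorem integrable_inner_nrbmFeature {p : ℝ} (hp : p < 1 / 2) {t s : ℝ} (ht : 0 ≤ t) (hs : 0 ≤ s)
    (ε δ : Bool) : Integrable fun u => ⟪nrbmFeature p (ε, t) u, nrbmFeature p (δ, s) u⟫_ℝ := by
  simp_rw [inner_nrbmFeature]
  exact (integrable_indicator_Ioc_rpow_neg (nrbmExponent_add_lt_one hp ε δ)
    (le_min ht hs)).const_mul _

theorem jointBMCov_eq_integral_inner {p : ℝ} (hp0 : 0 ≤ p) (hp : p < 1 / 2) {t s : ℝ}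
    (ht : 0 ≤ t) (hs : 0 ≤ s) (ε δ : Bool) :
    jointBMCov p (ε, t) (δ, s) = ∫ u, ⟪nrbmFeature p (ε, t) u, nrbmFeature p (δ, s) u⟫_ℝ := by
  simp_rw [inner_nrbmFeature]
  rw [integral_const_mul, integral_indicator_Ioc_rpow_neg (nrbmExponent_add_lt_one hp ε δ)
    (le_min ht hs), inner_nrbmDirection hp0 (by linarith)]
  have h1p : 1 - p ≠ 0 := by linarith
  cases ε <;> cases δ <;> simp only [jointBMCov, nrbmExponent, Bool.false_eq_true,
    Bool.true_eq_false, if_true, if_false, rpow_zero, rpow_one, zero_add, add_zero, sub_zero,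
    mul_one, one_mul, div_one]
  · field_simp
  · field_simp
  · have hmin : min t s ^ p * min t s ^ (1 - (p + p)) = min t s ^ (1 - p) := by
      rw [← rpow_add' (le_min ht hs) (by linarith : 0 < p + (1 - (p + p))).ne']
      ring_nf
    rw [← mul_rpow ht hs, ← max_mul_min t s, mul_rpow (le_max_of_le_left ht) (le_min ht hs),
      mul_assoc, ← mul_div_assoc, hmin]
    ring

theorem joint_bm_nrbm_cov_posSemidef_general (p : ℝ) (hp0 : 0 < p) (hp2 : p < 1 / 2)
    (n : ℕ) (ε : Fin n → Bool) (t : Fin n → ℝ) (ht : ∀ i, 0 ≤ t i)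
    (c : Fin n → ℝ) :
    0 ≤ ∑ i, ∑ j, c i * c j * jointBMCov p (ε i, t i) (ε j, t j) := by
  simp_rw [jointBMCov_eq_integral_inner hp0.le hp2 (ht _) (ht _)]
  exact sum_sum_mul_integral_inner_nonneg _ c (fun i => nrbmFeature p (ε i, t i))
    fun i j => integrable_inner_nrbmFeature hp2 (ht i) (ht j) (ε i) (ε j)

/-- The joint covariance kernel of a Brownian motion and its noise reinforced version with
reinforcement parameter `p ∈ (0, 1/2)` is positive semidefinite. -/
theorem joint_bm_nrbm_cov_posSemidef (p : ℝ) (hp0 : 0 < p) (hp2 : p < 1 / 2)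
    (n : ℕ) (hn : 1 ≤ n) (ε : Fin n → Bool) (t : Fin n → ℝ) (ht : ∀ i, 0 ≤ t i)
    (c : Fin n → ℝ) :
    0 ≤ ∑ i, ∑ j, c i * c j * jointBMCov p (ε i, t i) (ε j, t j) :=
  joint_bm_nrbm_cov_posSemidef_general p hp0 hp2 n ε t ht c
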